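/- arXiv:1902.03400 — 2 statements merged into one kernel-verified Lean document; each statement's English description precedes it below -/
import Mathlib

section
/- Similarly, if f ∈ C^{α(·)}(Ω̄_T) (variable Hölder continuous with respect to the parabolic metric), then the function f̃ defined on Ω × (-σ², T+σ²) by f̃(x,t) = f(x, min(max(t,0),T)) belongs to C^{α̃(·)} with norm bounded by C·|f|_{0,α(·),Ω_T}, where α̃ is the corresponding time-constant extension of α. -/
open Real Set

/-- The parabolic distance on `ℝⁿ × ℝ`. -/
noncomputable def pd {n : ℕ} (P Q : (Fin n → ℝ) × ℝ) : ℝ :=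
  max ‖P.1 - Q.1‖ (Real.sqrt |P.2 - Q.2|)

/- Clamping the time variable to `[0, T]` is 1-Lipschitz, so it can only shrink the parabolic
distance; since the Hölder exponent at the clamped point is nonnegative, the Hölder bound of `f`
at the clamped points is therefore also a bound for `f̃`, with `C = 1`. -/

theorem min_max_mem_Icc {α : Type*} [LinearOrder α] {a b : α} (hab : a ≤ b) (t : α) :
    min (max t a) b ∈ Icc a b :=
  ⟨le_min (le_max_right t a) hab, min_le_right _ b⟩

theorem abs_min_max_sub_min_max_le {α : Type*} [AddCommGroup α] [LinearOrder α]
    [IsOrderedAddMonoid α] (a b s t : α) : |min (max s a) b - min (max t a) b| ≤ |s - t| := by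
  simpa only [sub_self, abs_zero, max_eq_left (abs_nonneg (s - t))] using
    (abs_min_sub_min_le_max (max s a) b (max t a) b).trans
      (max_le_max (abs_max_sub_max_le_abs s t a) le_rfl)

theorem pd_nonneg {n : ℕ} (P Q : (Fin n → ℝ) × ℝ) : 0 ≤ pd P Q :=
  (sqrt_nonneg _).trans (le_max_right _ _)

theorem pd_le_pd_of_abs_sub_le {n : ℕ} (x y : Fin n → ℝ) {t s t' s' : ℝ}
    (h : |t' - s'| ≤ |t - s|) : pd (x, t') (y, s') ≤ pd (x, t) (y, s) :=
  max_le_max le_rfl (sqrt_le_sqrt h)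

theorem holder_time_extension_general (n : ℕ) (Ω : Set (Fin n → ℝ))
    (T σ : ℝ) (hT : 0 < T)
    (α : (Fin n → ℝ) × ℝ → ℝ)
    (hα : ∀ P ∈ Ω ×ˢ Icc 0 T, α P ∈ Ioc (0:ℝ) 1)
    (f : (Fin n → ℝ) × ℝ → ℝ) (K B : ℝ) (hK : 0 ≤ K) (hB : 0 ≤ B)
    (hf : ∀ P ∈ Ω ×ˢ Icc 0 T, ∀ Q ∈ Ω ×ˢ Icc 0 T,
      |f P - f Q| ≤ K * pd P Q ^ α Q) :
    ∃ C > (0:ℝ),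
      ∀ P ∈ Ω ×ˢ Ioo (-σ ^ 2) (T + σ ^ 2), ∀ Q ∈ Ω ×ˢ Ioo (-σ ^ 2) (T + σ ^ 2),
        |f (P.1, min (max P.2 0) T) - f (Q.1, min (max Q.2 0) T)| ≤
          C * (K + B) * pd P Q ^ α (Q.1, min (max Q.2 0) T) := by
  refine ⟨1, one_pos, ?_⟩
  rintro ⟨x, t⟩ ⟨hx, -⟩ ⟨y, s⟩ ⟨hy, -⟩
  have hP : (x, min (max t 0) T) ∈ Ω ×ˢ Icc 0 T := ⟨hx, min_max_mem_Icc hT.le t⟩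
  have hQ : (y, min (max s 0) T) ∈ Ω ×ˢ Icc 0 T := ⟨hy, min_max_mem_Icc hT.le s⟩
  have hpd : pd (x, min (max t 0) T) (y, min (max s 0) T) ≤ pd (x, t) (y, s) :=
    pd_le_pd_of_abs_sub_le x y (abs_min_max_sub_min_max_le 0 T t s)
  calc _ ≤ K * pd (x, min (max t 0) T) (y, min (max s 0) T) ^ α (y, min (max s 0) T) :=
        hf _ hP _ hQ
    _ ≤ (K + B) * pd (x, t) (y, s) ^ α (y, min (max s 0) T) := by
        have := (hα _ hQ).1.le
        have := pd_nonneg (x, min (max t 0) T) (y, min (max s 0) T)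
        gcongr
        linarith
    _ = _ := by rw [one_mul]

/-- Time-constant extension of a variable Hölder function: if `f` is bounded by `B`
and Hölder with constant `K` and exponent `α(·)` on `Ω × [0,T]`, then the extension
`f̃(x,t) = f(x, min(max(t,0),T))` is Hölder with exponent `α̃(x,t) = α(x, clamp t)`
on `Ω × (-σ², T+σ²)`, with constant `C (K + B)`, `C` depending only on the data. -/
theorem holder_time_extension (n : ℕ) (Ω : Set (Fin n → ℝ))
    (hΩ : Bornology.IsBounded Ω) (T σ : ℝ) (hT : 0 < T) (hσ : 0 < σ)
    (α : (Fin n → ℝ) × ℝ → ℝ)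
    (hα : ∀ P ∈ Ω ×ˢ Icc 0 T, α P ∈ Ioc (0:ℝ) 1)
    (M : ℝ) (hM : 0 < M)
    (hlog : ∀ P ∈ Ω ×ˢ Icc 0 T, ∀ Q ∈ Ω ×ˢ Icc 0 T, P ≠ Q →
      |α P - α Q| * |Real.log (pd P Q)| ≤ M)
    (f : (Fin n → ℝ) × ℝ → ℝ) (K B : ℝ) (hK : 0 ≤ K) (hB : 0 ≤ B)
    (hf : ∀ P ∈ Ω ×ˢ Icc 0 T, ∀ Q ∈ Ω ×ˢ Icc 0 T,
      |f P - f Q| ≤ K * pd P Q ^ α Q)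
    (hfb : ∀ P ∈ Ω ×ˢ Icc 0 T, |f P| ≤ B) :
    ∃ C > (0:ℝ),
      ∀ P ∈ Ω ×ˢ Ioo (-σ ^ 2) (T + σ ^ 2), ∀ Q ∈ Ω ×ˢ Ioo (-σ ^ 2) (T + σ ^ 2),
        |f (P.1, min (max P.2 0) T) - f (Q.1, min (max Q.2 0) T)| ≤
          C * (K + B) * pd P Q ^ α (Q.1, min (max Q.2 0) T) :=
  holder_time_extension_general n Ω T σ hT α hα f K B hK hB hf
end

section
/- With the same setup, f(x,t) = (|x|+√t)^{α(x,t)} does NOT belong to any constant-exponent Hölder space C^β(Ω̄_T) for β ∈ (γ², 1): the quotient |f(θ_n)-f(0)| / d(θ_n, 0)^β is unbounded along θ_n = (ζ/n, 0, …, 0, 1/n²). -/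
open Real Set Filter Topology

/-! Along `θ_m` we have `|x| + √t = (ζ + 1)/m` and `d(θ_m, 0) = 1/m`, so the quotient is exactly
`(ζ + 1)^{α(θ_m)} · m^{β - α(θ_m)}`. Since `α(θ_m) → γ² < β`, the first factor tends to a positive
constant and the second to infinity. -/

theorem norm_ite_eq_else_zero {ι E : Type*} [Fintype ι] [DecidableEq ι] [NormedAddCommGroup E]
    (i₀ : ι) (c : E) : ‖fun i : ι => if i = i₀ then c else 0‖ = ‖c‖ := by
  have h : (fun i : ι => if i = i₀ then c else 0) = Pi.single i₀ c :=
    funext fun i => (Pi.single_apply i₀ c i).symm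
  rw [h, Pi.norm_single]

theorem div_rpow_div_one_div_rpow {b r : ℝ} (hb : 0 ≤ b) (hr : 0 < r) (a β : ℝ) :
    (b / r) ^ a / (1 / r) ^ β = b ^ a * r ^ (β - a) := by
  rw [Real.div_rpow hb hr.le, one_div, Real.inv_rpow hr.le, Real.rpow_sub hr]
  field_simp

theorem tendsto_rpow_atTop_of_tendsto_exponent {α : Type*} {l : Filter α} {x e : α → ℝ} {L : ℝ}
    (hx : Tendsto x l atTop) (he : Tendsto e l (𝓝 L)) (hL : 0 < L) :
    Tendsto (fun i => x i ^ e i) l atTop := by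
  refine tendsto_atTop_mono' l ?_ ((tendsto_rpow_atTop (half_pos hL)).comp hx)
  filter_upwards [hx.eventually_ge_atTop 1, he.eventually_const_le (half_lt_self hL)] with i hx1 he1
  exact Real.rpow_le_rpow_of_exponent_le hx1 he1

theorem example_function_not_constant_holder_general (n : ℕ) (hn : 0 < n) (γ ζ : ℝ)
    (hγ1 : Real.exp (-2) < γ) (hζ1 : 0 < ζ) (hζ2 : ζ < 1 - γ)
    (β : ℝ) (hβ1 : γ ^ 2 < β) :
    Tendsto
      (fun m : ℕ =>
        |((‖(fun i : Fin n => if i = ⟨0, hn⟩ then ζ / m else 0)‖ +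
              Real.sqrt (1 / (m : ℝ) ^ 2)) ^
            ((γ + ‖(fun i : Fin n => if i = ⟨0, hn⟩ then ζ / m else 0)‖) *
              (γ + 1 / (m : ℝ) ^ 2))) -
          ((0:ℝ) + Real.sqrt 0) ^ ((γ + (0:ℝ)) * (γ + 0))| /
          pd ((fun i : Fin n => if i = ⟨0, hn⟩ then ζ / m else 0), 1 / (m : ℝ) ^ 2)
            (0, 0) ^ β)
      atTop atTop := by
  have hγ : 0 < γ := (Real.exp_pos _).trans hγ1
  set α : ℕ → ℝ := fun m => (γ + ζ / m) * (γ + 1 / (m : ℝ) ^ 2)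
  have hα : Tendsto α atTop (𝓝 (γ ^ 2)) := by
    have hinv : Tendsto (fun m : ℕ => 1 / (m : ℝ)) atTop (𝓝 0) := tendsto_one_div_atTop_nhds_zero_nat
    have h := (tendsto_const_nhds (x := γ)).add (hinv.const_mul ζ) |>.mul
      ((tendsto_const_nhds (x := γ)).add (hinv.pow 2))
    simpa [α, sq, div_eq_mul_inv] using h
  have hfactor : Tendsto (fun m => (ζ + 1) ^ α m) atTop (𝓝 ((ζ + 1) ^ γ ^ 2)) :=
    ((Real.continuousAt_const_rpow (by linarith)).tendsto).comp hα
  have hpow : Tendsto (fun m : ℕ => (m : ℝ) ^ (β - α m)) atTop atTop :=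
    tendsto_rpow_atTop_of_tendsto_exponent tendsto_natCast_atTop_atTop
      (tendsto_const_nhds.sub hα) (sub_pos.mpr hβ1)
  refine Tendsto.congr' ?_ (hfactor.pos_mul_atTop (by positivity) hpow)
  filter_upwards [eventually_gt_atTop 0] with m hm0
  have hm : (0 : ℝ) < m := Nat.cast_pos.mpr hm0
  have hsqrt : √(1 / (m : ℝ) ^ 2) = 1 / m := by
    rw [one_div, Real.sqrt_inv, Real.sqrt_sq hm.le, one_div]
  simp only [pd, sub_zero, norm_ite_eq_else_zero, Real.norm_of_nonneg (by positivity : 0 ≤ ζ / m),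
    abs_of_pos (by positivity : (0 : ℝ) < 1 / m ^ 2), hsqrt, Real.sqrt_zero, add_zero,
    Real.zero_rpow (mul_pos hγ hγ).ne']
  have hζ : ζ / m ≤ 1 / m := div_le_div_of_nonneg_right (by linarith) hm.le
  rw [← add_div, abs_of_nonneg (by positivity), max_eq_right hζ,
    div_rpow_div_one_div_rpow (by linarith) hm]

/-- With `α(x,t) = (γ+|x|)(γ+t)` and `f(x,t) = (|x|+√t)^{α(x,t)}` on
`Ω_T = B(0,ζ)×(0,ζ)`, `f` does not belong to any constant-exponent Hölder space
`C^β` with `γ² < β < 1`: along `θ_m = ((ζ/m,0,…,0), 1/m²)` the quotient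
`|f(θ_m) - f(0)| / d(θ_m,0)^β` tends to infinity (here `f(0,0) = 0`). -/
theorem example_function_not_constant_holder (n : ℕ) (hn : 0 < n) (γ ζ : ℝ)
    (hγ1 : Real.exp (-2) < γ) (hγ2 : γ < 1) (hζ1 : 0 < ζ) (hζ2 : ζ < 1 - γ)
    (β : ℝ) (hβ1 : γ ^ 2 < β) (hβ2 : β < 1) :
    Tendsto
      (fun m : ℕ =>
        |((‖(fun i : Fin n => if i = ⟨0, hn⟩ then ζ / m else 0)‖ +
              Real.sqrt (1 / (m : ℝ) ^ 2)) ^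
            ((γ + ‖(fun i : Fin n => if i = ⟨0, hn⟩ then ζ / m else 0)‖) *
              (γ + 1 / (m : ℝ) ^ 2))) -
          ((0:ℝ) + Real.sqrt 0) ^ ((γ + (0:ℝ)) * (γ + 0))| /
          pd ((fun i : Fin n => if i = ⟨0, hn⟩ then ζ / m else 0), 1 / (m : ℝ) ^ 2)
            (0, 0) ^ β)
      atTop atTop :=
  example_function_not_constant_holder_general n hn γ ζ hγ1 hζ1 hζ2 β hβ1
end
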